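/- Let n ≥ 5 with n−1 even, let x ∈ [0,1]^n, and let T* ⊆ {1,…,n−1} satisfy properties (P1)–(P4). Then the following two statements are equivalent: (i) there exist Lebesgue-measurable sets X_1, …, X_n ⊆ [0,1) with μ(X_i) = x_i for all i and ∑_{i=1}^{n−1} ( μ(X_i ∩ X_{i+1}) + μ(X_i ∩ X_n) ) = φ(T*) (index i+1 modulo n−1); (ii) there exists a vector z = (z_1,…,z_{n−1}) ∈ ℝ^{n−1} satisfying: z_i ≥ m_i for i ∈ T* ∪ (T*+1); z_i ≥ M_i for i ∈ {1,…,n−1} ∖ (T* ∪ (T*+1)); z_i ≤ M_i for all i ∈ {1,…,n−1}; z_i + z_{i+1} ≥ M'_i for i ∈ T*; and m'_i ≤ z_i + z_{i+1} ≤ M'_i for i ∈ {1,…,n−1} ∖ T* (index i+1 modulo n−1). -/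

import Mathlib

open Finset

/-- Cyclic successor on the rim `{1, …, n-1}` of the wheel `W_{n-1}`. -/
def wsucc (n i : ℕ) : ℕ := if i = n - 1 then 1 else i + 1

/-- The dual bound `φ(T)`. -/
noncomputable def phiW (n : ℕ) (x : ℕ → ℝ) (T : Finset ℕ) : ℝ :=
  ∑ i ∈ Finset.Icc 1 (n - 1) \ T, max 0 (x i + x (wsucc n i) - 1) +
  ∑ i ∈ Finset.Icc 1 (n - 1) \ (T ∪ T.image (wsucc n)), max 0 (x i + x n - 1) +
  ∑ i ∈ T, max 0 (x i + x (wsucc n i) + x n - 1)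

/-- `Φ* = max{φ(T) : T ⊆ {1,…,n-1}, T ∩ (T+1) = ∅}`. -/
noncomputable def phiStarW (n : ℕ) (x : ℕ → ℝ) : ℝ :=
  ((Finset.Icc 1 (n - 1)).powerset.filter
      (fun T => T ∩ T.image (wsucc n) = ∅)).sup'
    ⟨∅, by simp⟩ (phiW n x)

/-- Cyclic predecessor on the rim `{1, …, n-1}` of the wheel `W_{n-1}`. -/
def wpred (n i : ℕ) : ℕ := if i = 1 then n - 1 else i - 1

noncomputable def mW (n : ℕ) (x : ℕ → ℝ) (i : ℕ) : ℝ := max 0 (x i - x n)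

noncomputable def MW (n : ℕ) (x : ℕ → ℝ) (i : ℕ) : ℝ := min (x i) (1 - x n)

noncomputable def m'W (n : ℕ) (x : ℕ → ℝ) (i : ℕ) : ℝ := min 1 (x i + x (wsucc n i)) - x n

noncomputable def M'W (n : ℕ) (x : ℕ → ℝ) (i : ℕ) : ℝ := max 1 (x i + x (wsucc n i)) - x n

/-- The system of linear inequalities (1)–(6) for the vector `z`. -/
def zSystem (n : ℕ) (x : ℕ → ℝ) (T : Finset ℕ) (z : ℕ → ℝ) : Prop :=
  (∀ i ∈ T ∪ T.image (wsucc n), mW n x i ≤ z i) ∧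
  (∀ i ∈ Finset.Icc 1 (n - 1) \ (T ∪ T.image (wsucc n)), MW n x i ≤ z i) ∧
  (∀ i ∈ Finset.Icc 1 (n - 1), z i ≤ MW n x i) ∧
  (∀ i ∈ T, M'W n x i ≤ z i + z (wsucc n i)) ∧
  (∀ i ∈ Finset.Icc 1 (n - 1) \ T,
      m'W n x i ≤ z i + z (wsucc n i) ∧ z i + z (wsucc n i) ≤ M'W n x i)

/-!
Regrouped, the sum of intersections splits into the three sums of `phiW n x T`, and each term
is bounded below by a Bonferroni inequality `μ(A ∩ B) ≥ μ A + μ B - 1` or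
`μ(A ∩ B) + μ(A ∩ C) + μ(B ∩ C) ≥ μ A + μ B + μ C - 1`; so equality means that every term is
tight. For tight sets, `z i = μ(X i \ X n)` solves the system. Conversely, given `z`, take
`X n = [0, x n)` and let the rim set `X i` put mass `x i - z i` into `[0, x n)` and `z i` into
`[x n, 1)`, packed to the left for odd `i` and to the right for even `i`. As the rim has even
length, consecutive rim sets are packed oppositely, their overlaps are explicit, and the
inequalities on `z` are exactly the tightness conditions.
-/

open MeasureTheory

section Bonferroni

variable {α : Type*} [MeasurableSpace α] {μ : Measure α} {S A B C : Set α}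

lemma measureReal_add_le_add_inter (hS : μ S ≠ ⊤) (hA : A ⊆ S) (hB : B ⊆ S)
    (hBm : MeasurableSet B) : μ.real A + μ.real B ≤ μ.real S + μ.real (A ∩ B) := by
  rw [← measureReal_union_add_inter hBm (measure_ne_top_of_subset hA hS)
    (measure_ne_top_of_subset hB hS)]
  have := measureReal_mono (Set.union_subset hA hB) hS
  linarith

lemma measureReal_add_add_le_add_inter (hS : μ S ≠ ⊤) (hA : A ⊆ S) (hB : B ⊆ S) (hC : C ⊆ S)
    (hBm : MeasurableSet B) (hCm : MeasurableSet C) :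
    μ.real A + μ.real B + μ.real C
      ≤ μ.real S + μ.real (A ∩ B) + μ.real (A ∩ C) + μ.real (B ∩ C) := by
  have hAB := measureReal_union_add_inter hBm (measure_ne_top_of_subset hA hS)
    (measure_ne_top_of_subset hB hS)
  have hABC := measureReal_add_le_add_inter hS (Set.union_subset hA hB) hC hCm
  have hsplit := measureReal_union_le (μ := μ) (A ∩ C) (B ∩ C)
  rw [← Set.union_inter_distrib_right] at hsplit
  linarith

lemma measureReal_sdiff_le_sub (hS : μ S ≠ ⊤) (hA : A ⊆ S) (hC : C ⊆ S)
    (hCm : MeasurableSet C) : μ.real (A \ C) ≤ μ.real S - μ.real C := by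
  rw [← measureReal_sdiff hC hCm hS]
  exact measureReal_mono (Set.sdiff_subset_sdiff_left hA)
    (measure_ne_top_of_subset Set.sdiff_subset hS)

lemma measureReal_sdiff_add_sdiff_le (hS : μ S ≠ ⊤) (hA : A ⊆ S) (hB : B ⊆ S) (hC : C ⊆ S)
    (hBm : MeasurableSet B) (hCm : MeasurableSet C) :
    μ.real (A \ C) + μ.real (B \ C) ≤ μ.real S - μ.real C + μ.real (A ∩ B) := by
  rw [← measureReal_union_add_inter (hBm.diff hCm)
    (measure_ne_top_of_subset (Set.sdiff_subset.trans hA) hS)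
    (measure_ne_top_of_subset (Set.sdiff_subset.trans hB) hS), ← Set.union_sdiff_distrib]
  have hunion := measureReal_sdiff_le_sub hS (Set.union_subset hA hB) hC hCm
  have hinter : μ.real ((A \ C) ∩ (B \ C)) ≤ μ.real (A ∩ B) :=
    measureReal_mono (Set.inter_subset_inter Set.sdiff_subset Set.sdiff_subset)
      (measure_ne_top_of_subset (Set.inter_subset_left.trans hA) hS)
  linarith

lemma le_measureReal_sdiff_add_sdiff (hS : μ S ≠ ⊤) (hA : A ⊆ S) (hB : B ⊆ S) (hC : C ⊆ S)
    (hBm : MeasurableSet B) :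
    μ.real A + μ.real B - μ.real (A ∩ B) - μ.real C ≤ μ.real (A \ C) + μ.real (B \ C) := by
  have hAB := measureReal_union_add_inter hBm (measure_ne_top_of_subset hA hS)
    (measure_ne_top_of_subset hB hS)
  have hdiff := le_measureReal_sdiff (μ := μ) (s₁ := A ∪ B) (measure_ne_top_of_subset hC hS)
  have hunion := measureReal_union_le (μ := μ) (A \ C) (B \ C)
  rw [← Set.union_sdiff_distrib] at hunion
  linarith

end Bonferroni

section Rim

variable {n i : ℕ}

lemma wsucc_mem_Icc (hi : i ∈ Icc 1 (n - 1)) : wsucc n i ∈ Icc 1 (n - 1) := by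
  simp only [mem_Icc] at hi ⊢
  unfold wsucc
  split_ifs <;> omega

lemma wsucc_injOn : Set.InjOn (wsucc n) (Icc 1 (n - 1)) := by
  intro i hi j hj h
  simp only [coe_Icc, Set.mem_Icc] at hi hj
  unfold wsucc at h
  split_ifs at h <;> omega

lemma even_wsucc_iff (heven : Even (n - 1)) (hi : i ∈ Icc 1 (n - 1)) :
    Even (wsucc n i) ↔ ¬Even i := by
  simp only [mem_Icc] at hi
  unfold wsucc
  split_ifs with h
  · subst h
    simpa using heven
  · exact Nat.even_add_one

lemma mem_Icc_of_mem_rim (hi : i ∈ Icc 1 (n - 1)) : i ∈ Icc 1 n := by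
  simp only [mem_Icc] at hi ⊢; omega

lemma self_mem_Icc_of_mem_rim (hi : i ∈ Icc 1 (n - 1)) : n ∈ Icc 1 n := by
  simp only [mem_Icc] at hi ⊢; omega

lemma union_image_wsucc_subset {T : Finset ℕ} (hT : T ⊆ Icc 1 (n - 1)) :
    T ∪ T.image (wsucc n) ⊆ Icc 1 (n - 1) :=
  union_subset hT (image_subset_iff.mpr fun _ hi ↦ wsucc_mem_Icc (hT hi))

lemma sum_rim_add_eq {T : Finset ℕ} (hT : T ⊆ Icc 1 (n - 1))
    (hP1 : T ∩ T.image (wsucc n) = ∅) (e a : ℕ → ℝ) :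
    ∑ i ∈ Icc 1 (n - 1), (e i + a i) =
      ∑ i ∈ Icc 1 (n - 1) \ T, e i + ∑ i ∈ Icc 1 (n - 1) \ (T ∪ T.image (wsucc n)), a i +
        ∑ i ∈ T, (e i + a i + a (wsucc n i)) := by
  have he := sum_sdiff hT (f := e)
  have ha := sum_sdiff (union_image_wsucc_subset hT) (f := a)
  rw [sum_union (disjoint_iff_inter_eq_empty.mpr hP1),
    sum_image (wsucc_injOn.mono (coe_subset.mpr hT))] at ha
  rw [sum_add_distrib, sum_add_distrib, sum_add_distrib]
  linarith

end Rim

section UnitInterval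

variable {A B C : Set ℝ}

lemma volume_Ico_zero_one_ne_top : volume (Set.Ico (0 : ℝ) 1) ≠ ⊤ := by simp

lemma max_zero_sub_one_le_volume_real_inter (hA : A ⊆ Set.Ico 0 1) (hB : B ⊆ Set.Ico 0 1)
    (hBm : MeasurableSet B) :
    max 0 (volume.real A + volume.real B - 1) ≤ volume.real (A ∩ B) := by
  have := measureReal_add_le_add_inter volume_Ico_zero_one_ne_top hA hB hBm
  simp only [Real.volume_real_Ico, sub_zero, zero_le_one, max_eq_left] at this
  exact max_le measureReal_nonneg (by linarith)

lemma max_zero_sub_one_le_volume_real_inter₃ (hA : A ⊆ Set.Ico 0 1) (hB : B ⊆ Set.Ico 0 1)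
    (hC : C ⊆ Set.Ico 0 1) (hBm : MeasurableSet B) (hCm : MeasurableSet C) :
    max 0 (volume.real A + volume.real B + volume.real C - 1)
      ≤ volume.real (A ∩ B) + volume.real (A ∩ C) + volume.real (B ∩ C) := by
  have := measureReal_add_add_le_add_inter volume_Ico_zero_one_ne_top hA hB hC hBm hCm
  simp only [Real.volume_real_Ico, sub_zero, zero_le_one, max_eq_left] at this
  exact max_le (by positivity) (by linarith)

end UnitInterval

def IsRealization (n : ℕ) (x : ℕ → ℝ) (X : ℕ → Set ℝ) : Prop :=
  ∀ i ∈ Icc 1 n, MeasurableSet (X i) ∧ X i ⊆ Set.Ico 0 1 ∧ volume.real (X i) = x i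

def AttainsPhiW (n : ℕ) (x : ℕ → ℝ) (T : Finset ℕ) (X : ℕ → Set ℝ) : Prop :=
  (∀ i ∈ Icc 1 (n - 1) \ T,
    volume.real (X i ∩ X (wsucc n i)) = max 0 (x i + x (wsucc n i) - 1)) ∧
  (∀ i ∈ Icc 1 (n - 1) \ (T ∪ T.image (wsucc n)),
    volume.real (X i ∩ X n) = max 0 (x i + x n - 1)) ∧
  (∀ i ∈ T, volume.real (X i ∩ X (wsucc n i)) + volume.real (X i ∩ X n)
      + volume.real (X (wsucc n i) ∩ X n) = max 0 (x i + x (wsucc n i) + x n - 1))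

namespace IsRealization

variable {n i : ℕ} {x : ℕ → ℝ} {X : ℕ → Set ℝ}

lemma max_zero_sub_one_le_edge (hX : IsRealization n x X) (hi : i ∈ Icc 1 (n - 1)) :
    max 0 (x i + x (wsucc n i) - 1) ≤ volume.real (X i ∩ X (wsucc n i)) := by
  obtain ⟨-, hAs, hAv⟩ := hX i (mem_Icc_of_mem_rim hi)
  obtain ⟨hBm, hBs, hBv⟩ := hX _ (mem_Icc_of_mem_rim (wsucc_mem_Icc hi))
  simpa [hAv, hBv] using max_zero_sub_one_le_volume_real_inter hAs hBs hBm

lemma max_zero_sub_one_le_spoke (hX : IsRealization n x X) (hi : i ∈ Icc 1 (n - 1)) :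
    max 0 (x i + x n - 1) ≤ volume.real (X i ∩ X n) := by
  obtain ⟨-, hAs, hAv⟩ := hX i (mem_Icc_of_mem_rim hi)
  obtain ⟨hCm, hCs, hCv⟩ := hX n (self_mem_Icc_of_mem_rim hi)
  simpa [hAv, hCv] using max_zero_sub_one_le_volume_real_inter hAs hCs hCm

lemma max_zero_sub_one_le_triangle (hX : IsRealization n x X) (hi : i ∈ Icc 1 (n - 1)) :
    max 0 (x i + x (wsucc n i) + x n - 1) ≤ volume.real (X i ∩ X (wsucc n i)) +
      volume.real (X i ∩ X n) + volume.real (X (wsucc n i) ∩ X n) := by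
  obtain ⟨-, hAs, hAv⟩ := hX i (mem_Icc_of_mem_rim hi)
  obtain ⟨hBm, hBs, hBv⟩ := hX _ (mem_Icc_of_mem_rim (wsucc_mem_Icc hi))
  obtain ⟨hCm, hCs, hCv⟩ := hX n (self_mem_Icc_of_mem_rim hi)
  simpa [hAv, hBv, hCv] using max_zero_sub_one_le_volume_real_inter₃ hAs hBs hCs hBm hCm

lemma inter_hub_add_sdiff_hub (hX : IsRealization n x X) (hi : i ∈ Icc 1 (n - 1)) :
    volume.real (X i ∩ X n) + volume.real (X i \ X n) = x i ∧
      volume.real (X i ∩ X n) ≤ x n ∧ volume.real (X i \ X n) ≤ 1 - x n := by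
  obtain ⟨-, hAs, hAv⟩ := hX i (mem_Icc_of_mem_rim hi)
  obtain ⟨hCm, hCs, hCv⟩ := hX n (self_mem_Icc_of_mem_rim hi)
  have hS := volume_Ico_zero_one_ne_top
  refine ⟨hAv ▸ measureReal_inter_add_sdiff hCm (measure_ne_top_of_subset hAs hS),
    hCv ▸ measureReal_mono Set.inter_subset_right (measure_ne_top_of_subset hCs hS), ?_⟩
  simpa [hCv] using measureReal_sdiff_le_sub hS hAs hCs hCm

lemma sdiff_hub_add_sdiff_hub_mem_Icc (hX : IsRealization n x X) (hi : i ∈ Icc 1 (n - 1)) :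
    volume.real (X i \ X n) + volume.real (X (wsucc n i) \ X n) ∈ Set.Icc
      (x i + x (wsucc n i) - volume.real (X i ∩ X (wsucc n i)) - x n)
      (1 - x n + volume.real (X i ∩ X (wsucc n i))) := by
  obtain ⟨-, hAs, hAv⟩ := hX i (mem_Icc_of_mem_rim hi)
  obtain ⟨hBm, hBs, hBv⟩ := hX _ (mem_Icc_of_mem_rim (wsucc_mem_Icc hi))
  obtain ⟨hCm, hCs, hCv⟩ := hX n (self_mem_Icc_of_mem_rim hi)
  have hS := volume_Ico_zero_one_ne_top
  constructor
  · simpa [hAv, hBv, hCv] using le_measureReal_sdiff_add_sdiff hS hAs hBs hCs hBm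
  · simpa [hCv] using measureReal_sdiff_add_sdiff_le hS hAs hBs hCs hBm hCm

end IsRealization

lemma sum_eq_phiW_iff {n : ℕ} {x : ℕ → ℝ} {T : Finset ℕ} {X : ℕ → Set ℝ}
    (hX : IsRealization n x X) (hT : T ⊆ Icc 1 (n - 1)) (hP1 : T ∩ T.image (wsucc n) = ∅) :
    ∑ i ∈ Icc 1 (n - 1), (volume.real (X i ∩ X (wsucc n i)) + volume.real (X i ∩ X n))
      = phiW n x T ↔ AttainsPhiW n x T X := by
  have hedge : ∀ i ∈ Icc 1 (n - 1) \ T, _ :=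
    fun i hi ↦ hX.max_zero_sub_one_le_edge (mem_sdiff.mp hi).1
  have hspoke : ∀ i ∈ Icc 1 (n - 1) \ (T ∪ T.image (wsucc n)), _ :=
    fun i hi ↦ hX.max_zero_sub_one_le_spoke (mem_sdiff.mp hi).1
  have htriangle : ∀ i ∈ T, _ := fun i hi ↦ hX.max_zero_sub_one_le_triangle (hT hi)
  rw [sum_rim_add_eq hT hP1, phiW]
  constructor
  · intro hsum
    have h1 := sum_le_sum hedge
    have h2 := sum_le_sum hspoke
    have h3 := sum_le_sum htriangle
    exact ⟨fun i hi ↦ ((sum_eq_sum_iff_of_le hedge).mp (by linarith) i hi).symm,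
      fun i hi ↦ ((sum_eq_sum_iff_of_le hspoke).mp (by linarith) i hi).symm,
      fun i hi ↦ ((sum_eq_sum_iff_of_le htriangle).mp (by linarith) i hi).symm⟩
  · rintro ⟨h1, h2, h3⟩
    rw [sum_congr rfl h1, sum_congr rfl h2, sum_congr rfl h3]

lemma zSystem_of_attainsPhiW {n : ℕ} {x : ℕ → ℝ} {T : Finset ℕ} {X : ℕ → Set ℝ}
    (hX : IsRealization n x X) (hT : T ⊆ Icc 1 (n - 1))
    (hP3 : ∀ i ∈ T, 1 ≤ x i + x (wsucc n i) + x n ∧ x i + x (wsucc n i) + x n ≤ 2)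
    (hattain : AttainsPhiW n x T X) :
    zSystem n x T (fun i ↦ volume.real (X i \ X n)) := by
  obtain ⟨htight_edge, htight_spoke, htight_triangle⟩ := hattain
  refine ⟨fun i hi ↦ ?_, fun i hi ↦ ?_, fun i hi ↦ ?_, fun i hi ↦ ?_, fun i hi ↦ ?_⟩
  · have := hX.inter_hub_add_sdiff_hub (union_image_wsucc_subset hT hi)
    exact max_le measureReal_nonneg (by linarith)
  · obtain ⟨hsplit, -⟩ := hX.inter_hub_add_sdiff_hub (mem_sdiff.mp hi).1
    have ha := htight_spoke i hi
    rcases max_cases (0 : ℝ) (x i + x n - 1) with ⟨hmax, _⟩ | ⟨hmax, _⟩ <;> rw [hmax] at ha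
    · exact min_le_of_left_le (by linarith)
    · exact min_le_of_right_le (by linarith)
  · have := hX.inter_hub_add_sdiff_hub hi
    exact le_min (by linarith [measureReal_nonneg (μ := volume) (s := X i ∩ X n)]) (by linarith)
  · obtain ⟨hsplit, -⟩ := hX.inter_hub_add_sdiff_hub (hT hi)
    obtain ⟨hsplit', -⟩ := hX.inter_hub_add_sdiff_hub (wsucc_mem_Icc (hT hi))
    have he := (le_max_right _ _).trans (hX.max_zero_sub_one_le_edge (hT hi))
    have htri := htight_triangle i hi
    rw [max_eq_right (by linarith [hP3 i hi])] at htri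
    have : max 1 (x i + x (wsucc n i)) ≤ 1 + volume.real (X i ∩ X (wsucc n i)) :=
      max_le (by linarith [measureReal_nonneg (μ := volume) (s := X i ∩ X (wsucc n i))])
        (by linarith)
    simp only [M'W]
    linarith
  · obtain ⟨hlow, hup⟩ := hX.sdiff_hub_add_sdiff_hub_mem_Icc (mem_sdiff.mp hi).1
    have he := htight_edge i hi
    rcases max_cases (0 : ℝ) (x i + x (wsucc n i) - 1) with ⟨hmax, _⟩ | ⟨hmax, _⟩ <;>
      rw [hmax] at he
    · rw [m'W, M'W, min_eq_right (by linarith), max_eq_left (by linarith)]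
      constructor <;> linarith
    · rw [m'W, M'W, min_eq_left (by linarith), max_eq_right (by linarith)]
      constructor <;> linarith

section Packing

/-! The hub occupies `[0, h)`; a rim set puts mass `a` into it and mass `z` into `[h, 1)`,
packed against the left or against the right end of both intervals. -/

def leftPacked (h a z : ℝ) : Set ℝ := Set.Ico 0 a ∪ Set.Ico h (h + z)

def rightPacked (h a z : ℝ) : Set ℝ := Set.Ico (h - a) h ∪ Set.Ico (1 - z) 1

variable {h a z a' z' : ℝ}

lemma measurableSet_leftPacked : MeasurableSet (leftPacked h a z) :=
  measurableSet_Ico.union measurableSet_Ico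

lemma measurableSet_rightPacked : MeasurableSet (rightPacked h a z) :=
  measurableSet_Ico.union measurableSet_Ico

lemma volume_real_Ico_union_Ico {p q r s : ℝ} (hpq : p ≤ q) (hqr : q ≤ r) (hrs : r ≤ s) :
    volume.real (Set.Ico p q ∪ Set.Ico r s) = (q - p) + (s - r) := by
  rw [measureReal_union (Set.Ico_disjoint_Ico.mpr (by simp [*])) measurableSet_Ico
    (by simp) (by simp), Real.volume_real_Ico_of_le hpq, Real.volume_real_Ico_of_le hrs]

lemma leftPacked_subset (ha : a ∈ Set.Icc 0 h) (hz : z ∈ Set.Icc 0 (1 - h)) :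
    leftPacked h a z ⊆ Set.Ico 0 1 :=
  Set.union_subset (Set.Ico_subset_Ico_right (by linarith [ha.2, hz.1, hz.2]))
    (Set.Ico_subset_Ico (by linarith [ha.1, ha.2]) (by linarith [hz.2]))

lemma rightPacked_subset (ha : a ∈ Set.Icc 0 h) (hz : z ∈ Set.Icc 0 (1 - h)) :
    rightPacked h a z ⊆ Set.Ico 0 1 :=
  Set.union_subset (Set.Ico_subset_Ico (by linarith [ha.2]) (by linarith [hz.1, hz.2]))
    (Set.Ico_subset_Ico_left (by linarith [ha.1, ha.2, hz.2]))

lemma volume_real_leftPacked (ha : a ∈ Set.Icc 0 h) (hz : z ∈ Set.Icc 0 (1 - h)) :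
    volume.real (leftPacked h a z) = a + z := by
  rw [leftPacked, volume_real_Ico_union_Ico ha.1 ha.2 (by linarith [hz.1])]
  ring

lemma volume_real_rightPacked (ha : a ∈ Set.Icc 0 h) (hz : z ∈ Set.Icc 0 (1 - h)) :
    volume.real (rightPacked h a z) = a + z := by
  rw [rightPacked, volume_real_Ico_union_Ico (by linarith [ha.1]) (by linarith [hz.2])
    (by linarith [hz.1])]
  ring

lemma leftPacked_inter_hub (ha : a ∈ Set.Icc 0 h) :
    leftPacked h a z ∩ Set.Ico 0 h = Set.Ico 0 a := by
  ext y
  simp only [leftPacked, Set.mem_inter_iff, Set.mem_union, Set.mem_Ico, Set.mem_Icc] at *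
  grind

lemma rightPacked_inter_hub (ha : a ∈ Set.Icc 0 h) (hz : z ∈ Set.Icc 0 (1 - h)) :
    rightPacked h a z ∩ Set.Ico 0 h = Set.Ico (h - a) h := by
  ext y
  simp only [rightPacked, Set.mem_inter_iff, Set.mem_union, Set.mem_Ico, Set.mem_Icc] at *
  grind

lemma leftPacked_inter_rightPacked (ha : a ∈ Set.Icc 0 h) (hz : z ∈ Set.Icc 0 (1 - h))
    (ha' : a' ∈ Set.Icc 0 h) (hz' : z' ∈ Set.Icc 0 (1 - h)) :
    leftPacked h a z ∩ rightPacked h a' z' = Set.Ico (h - a') a ∪ Set.Ico (1 - z') (h + z) := by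
  ext y
  simp only [leftPacked, rightPacked, Set.mem_inter_iff, Set.mem_union, Set.mem_Ico,
    Set.mem_Icc] at *
  grind

lemma volume_real_leftPacked_inter_rightPacked (ha : a ∈ Set.Icc 0 h)
    (hz : z ∈ Set.Icc 0 (1 - h)) (ha' : a' ∈ Set.Icc 0 h) (hz' : z' ∈ Set.Icc 0 (1 - h)) :
    volume.real (leftPacked h a z ∩ rightPacked h a' z')
      = max 0 (a + a' - h) + max 0 (z + z' - (1 - h)) := by
  rw [leftPacked_inter_rightPacked ha hz ha' hz', measureReal_union (Set.Ico_disjoint_Ico.mpr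
    (min_le_of_left_le (le_max_of_le_right (by linarith [ha.2, hz'.2])))) measurableSet_Ico
    (by simp) (by simp), Real.volume_real_Ico, Real.volume_real_Ico, max_comm, max_comm (_ - _)]
  ring_nf

end Packing

lemma zSystem.mem_Icc {n i : ℕ} {x z : ℕ → ℝ} {T : Finset ℕ}
    (hx : ∀ i ∈ Icc 1 n, 0 ≤ x i ∧ x i ≤ 1) (hz : zSystem n x T z) (hi : i ∈ Icc 1 (n - 1)) :
    x i - z i ∈ Set.Icc 0 (x n) ∧ z i ∈ Set.Icc 0 (1 - x n) := by
  have hlow : mW n x i ≤ z i := by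
    by_cases hU : i ∈ T ∪ T.image (wsucc n)
    · exact hz.1 i hU
    · refine le_trans ?_ (hz.2.1 i (mem_sdiff.mpr ⟨hi, hU⟩))
      have := hx i (mem_Icc_of_mem_rim hi)
      have := hx n (self_mem_Icc_of_mem_rim hi)
      exact max_le (le_min (by linarith) (by linarith)) (le_min (by linarith) (by linarith))
  have hup : z i ≤ MW n x i := hz.2.2.1 i hi
  rw [mW, max_le_iff] at hlow
  rw [MW, le_min_iff] at hup
  exact ⟨⟨by linarith, by linarith⟩, ⟨hlow.1, hup.2⟩⟩

section Wheel

def wheelSets (n : ℕ) (x z : ℕ → ℝ) (i : ℕ) : Set ℝ :=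
  if i = n then Set.Ico 0 (x n)
  else if Even i then rightPacked (x n) (x i - z i) (z i)
  else leftPacked (x n) (x i - z i) (z i)

variable {n i : ℕ} {x z : ℕ → ℝ}

lemma wheelSets_of_mem_rim (hi : i ∈ Icc 1 (n - 1)) : wheelSets n x z i =
    if Even i then rightPacked (x n) (x i - z i) (z i) else leftPacked (x n) (x i - z i) (z i) :=
  if_neg (by simp only [mem_Icc] at hi; omega)

lemma isRealization_wheelSets (hx : ∀ i ∈ Icc 1 n, 0 ≤ x i ∧ x i ≤ 1)
    (hb : ∀ i ∈ Icc 1 (n - 1), x i - z i ∈ Set.Icc 0 (x n) ∧ z i ∈ Set.Icc 0 (1 - x n)) :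
    IsRealization n x (wheelSets n x z) := by
  intro i hi
  by_cases hin : i = n
  · subst hin
    obtain ⟨h0, h1⟩ := hx i hi
    simp only [wheelSets]
    exact ⟨measurableSet_Ico, Set.Ico_subset_Ico_right h1,
      (Real.volume_real_Ico_of_le h0).trans (sub_zero _)⟩
  have hi' : i ∈ Icc 1 (n - 1) := by simp only [mem_Icc] at hi ⊢; omega
  obtain ⟨ha, hz⟩ := hb i hi'
  rw [wheelSets_of_mem_rim hi']
  split_ifs
  · exact ⟨measurableSet_rightPacked, rightPacked_subset ha hz,
      (volume_real_rightPacked ha hz).trans (by ring)⟩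
  · exact ⟨measurableSet_leftPacked, leftPacked_subset ha hz,
      (volume_real_leftPacked ha hz).trans (by ring)⟩

lemma volume_real_wheelSets_inter_hub
    (hb : ∀ i ∈ Icc 1 (n - 1), x i - z i ∈ Set.Icc 0 (x n) ∧ z i ∈ Set.Icc 0 (1 - x n))
    (hi : i ∈ Icc 1 (n - 1)) : volume.real (wheelSets n x z i ∩ wheelSets n x z n) = x i - z i := by
  obtain ⟨ha, hz⟩ := hb i hi
  rw [wheelSets_of_mem_rim hi, wheelSets, if_pos rfl]
  split_ifs
  · rw [rightPacked_inter_hub ha hz, Real.volume_real_Ico_of_le (by linarith [ha.1])]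
    ring
  · rw [leftPacked_inter_hub ha, Real.volume_real_Ico_of_le ha.1, sub_zero]

lemma volume_real_wheelSets_inter_wsucc (heven : Even (n - 1))
    (hb : ∀ i ∈ Icc 1 (n - 1), x i - z i ∈ Set.Icc 0 (x n) ∧ z i ∈ Set.Icc 0 (1 - x n))
    (hi : i ∈ Icc 1 (n - 1)) :
    volume.real (wheelSets n x z i ∩ wheelSets n x z (wsucc n i)) =
      max 0 (x i - z i + (x (wsucc n i) - z (wsucc n i)) - x n) +
        max 0 (z i + z (wsucc n i) - (1 - x n)) := by
  have hj := wsucc_mem_Icc hi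
  obtain ⟨ha, hz⟩ := hb i hi
  obtain ⟨ha', hz'⟩ := hb _ hj
  have hpar := even_wsucc_iff heven hi
  rw [wheelSets_of_mem_rim hi, wheelSets_of_mem_rim hj]
  split_ifs with h h' h'
  · exact absurd h (hpar.mp h')
  · rw [Set.inter_comm, volume_real_leftPacked_inter_rightPacked ha' hz' ha hz, add_comm (z _)]
    ring_nf
  · exact volume_real_leftPacked_inter_rightPacked ha hz ha' hz'
  · exact absurd (hpar.mpr h) h'

end Wheel

lemma attainsPhiW_wheelSets {n : ℕ} {x z : ℕ → ℝ} {T : Finset ℕ} (heven : Even (n - 1))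
    (hx : ∀ i ∈ Icc 1 n, 0 ≤ x i ∧ x i ≤ 1) (hT : T ⊆ Icc 1 (n - 1))
    (hP3 : ∀ i ∈ T, 1 ≤ x i + x (wsucc n i) + x n ∧ x i + x (wsucc n i) + x n ≤ 2)
    (hz : zSystem n x T z) : AttainsPhiW n x T (wheelSets n x z) := by
  have hb : ∀ i ∈ Icc 1 (n - 1), _ := fun i hi ↦ hz.mem_Icc hx hi
  obtain ⟨-, hz2, hz3, hz4, hz5⟩ := hz
  refine ⟨fun i hi ↦ ?_, fun i hi ↦ ?_, fun i hi ↦ ?_⟩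
  · obtain ⟨hlow, hup⟩ := hz5 i hi
    rw [volume_real_wheelSets_inter_wsucc heven hb (mem_sdiff.mp hi).1]
    rcases le_total (x i + x (wsucc n i)) 1 with hc | hc
    · rw [m'W, min_eq_right hc] at hlow
      rw [M'W, max_eq_left hc] at hup
      rw [max_eq_left (by linarith), max_eq_left (by linarith), max_eq_left (by linarith)]
      ring
    · rw [m'W, min_eq_left hc] at hlow
      rw [M'W, max_eq_right hc] at hup
      rw [max_eq_right (by linarith), max_eq_right (by linarith), max_eq_right (by linarith)]
      ring
  · have hi' := (mem_sdiff.mp hi).1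
    rw [volume_real_wheelSets_inter_hub hb hi',
      le_antisymm (hz3 i hi') (hz2 i hi), MW]
    rcases le_total (x i) (1 - x n) with hc | hc
    · rw [min_eq_left hc, max_eq_left (by linarith)]
      ring
    · rw [min_eq_right hc, max_eq_right (by linarith)]
      ring
  · have hup := hz4 i hi
    rw [M'W] at hup
    have h1 := le_max_left 1 (x i + x (wsucc n i))
    have h2 := le_max_right 1 (x i + x (wsucc n i))
    rw [volume_real_wheelSets_inter_wsucc heven hb (hT hi),
      volume_real_wheelSets_inter_hub hb (hT hi),
      volume_real_wheelSets_inter_hub hb (wsucc_mem_Icc (hT hi)),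
      max_eq_left (by linarith), max_eq_right (by linarith), max_eq_right (by linarith [hP3 i hi])]
    ring

theorem sets_iff_zSystem_general (n : ℕ) (heven : Even (n - 1)) (x : ℕ → ℝ)
    (hx : ∀ i ∈ Finset.Icc 1 n, 0 ≤ x i ∧ x i ≤ 1)
    (T : Finset ℕ) (hT : T ⊆ Finset.Icc 1 (n - 1))
    (hP1 : T ∩ T.image (wsucc n) = ∅)
    (hP3 : ∀ i ∈ T, 1 ≤ x i + x (wsucc n i) + x n ∧ x i + x (wsucc n i) + x n ≤ 2) :
    (∃ X : ℕ → Set ℝ,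
        (∀ i ∈ Finset.Icc 1 n, MeasurableSet (X i)) ∧
        (∀ i ∈ Finset.Icc 1 n, X i ⊆ Set.Ico 0 1) ∧
        (∀ i ∈ Finset.Icc 1 n, (volume (X i)).toReal = x i) ∧
        ∑ i ∈ Finset.Icc 1 (n - 1),
            ((volume (X i ∩ X (wsucc n i))).toReal + (volume (X i ∩ X n)).toReal)
          = phiW n x T)
    ↔ (∃ z : ℕ → ℝ, zSystem n x T z) := by
  simp only [← measureReal_def]
  constructor
  · rintro ⟨X, hXm, hXs, hXv, hsum⟩
    have hX : IsRealization n x X := fun i hi ↦ ⟨hXm i hi, hXs i hi, hXv i hi⟩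
    exact ⟨_, zSystem_of_attainsPhiW hX hT hP3 ((sum_eq_phiW_iff hX hT hP1).mp hsum)⟩
  · rintro ⟨z, hz⟩
    have hX := isRealization_wheelSets hx fun i hi ↦ hz.mem_Icc hx hi
    exact ⟨wheelSets n x z, fun i hi ↦ (hX i hi).1, fun i hi ↦ (hX i hi).2.1,
      fun i hi ↦ (hX i hi).2.2,
      (sum_eq_phiW_iff hX hT hP1).mpr (attainsPhiW_wheelSets heven hx hT hP3 hz)⟩

theorem sets_iff_zSystem (n : ℕ) (hn : 5 ≤ n) (heven : Even (n - 1)) (x : ℕ → ℝ)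
    (hx : ∀ i ∈ Finset.Icc 1 n, 0 ≤ x i ∧ x i ≤ 1)
    (T : Finset ℕ) (hT : T ⊆ Finset.Icc 1 (n - 1))
    (hP1 : T ∩ T.image (wsucc n) = ∅)
    (hP2 : phiW n x T = phiStarW n x)
    (hP3 : ∀ i ∈ T, 1 ≤ x i + x (wsucc n i) + x n ∧ x i + x (wsucc n i) + x n ≤ 2)
    (hP4 : ∀ i ∈ Finset.Icc 1 (n - 1),
      1 ≤ x i + x (wsucc n i) + x n → x i + x (wsucc n i) + x n ≤ 2 →
        (wpred n i ∈ T ∨ i ∈ T ∨ wsucc n i ∈ T)) :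
    (∃ X : ℕ → Set ℝ,
        (∀ i ∈ Finset.Icc 1 n, MeasurableSet (X i)) ∧
        (∀ i ∈ Finset.Icc 1 n, X i ⊆ Set.Ico 0 1) ∧
        (∀ i ∈ Finset.Icc 1 n, (volume (X i)).toReal = x i) ∧
        ∑ i ∈ Finset.Icc 1 (n - 1),
            ((volume (X i ∩ X (wsucc n i))).toReal + (volume (X i ∩ X n)).toReal)
          = phiW n x T)
    ↔ (∃ z : ℕ → ℝ, zSystem n x T z) :=
  sets_iff_zSystem_general n heven x hx T hT hP1 hP3
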